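/- arXiv:1410.8764 — 3 statements merged into one kernel-verified Lean document; each statement's English description precedes it below -/
import Mathlib

section
/- Let L be a lattice, let σ ⊆ L_ℚ be a rational polyhedral cone, let θ: L → P be a homomorphism to a finitely generated abelian group, and let M = ker θ. Then the monoid σ ∩ M is finitely generated; consequently, for any commutative noetherian ring R, the monoid algebra R[σ ∩ M] is a finitely generated R-algebra. -/
open scoped TensorProduct

universe u

/-! ### Properties of commutative (additive) monoids -/

/-- `Q` is cancellative: `a + x = a + y → x = y`. -/
def IsCancellativeAddMonoid (Q : Type*) [AddCommMonoid Q] : Prop :=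
  ∀ a x y : Q, a + x = a + y → x = y

/-- `Q` is torsion-free: `n • x = n • y` for some `n > 0` implies `x = y`. -/
def IsTorsionFreeAddMonoid (Q : Type*) [AddCommMonoid Q] : Prop :=
  ∀ n : ℕ, 0 < n → ∀ x y : Q, n • x = n • y → x = y

/-- `Q` is seminormal: an element `x = a - b` of the Grothendieck group with
`2x, 3x ∈ Q` lies in `Q` (stated elementwise via representatives). -/
def IsSeminormalAddMonoid (Q : Type*) [AddCommMonoid Q] : Prop :=
  ∀ a b : Q, (∃ y : Q, a + a = b + b + y) → (∃ z : Q, a + a + a = b + b + b + z) →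
    ∃ w : Q, a = b + w

/-- `Q` is normal: an element `x = a - b` of the Grothendieck group with
`n • x ∈ Q` for some `n > 0` lies in `Q` (stated elementwise via representatives). -/
def IsNormalAddMonoid (Q : Type*) [AddCommMonoid Q] : Prop :=
  ∀ a b : Q, (∃ n : ℕ, 0 < n ∧ ∃ y : Q, n • a = n • b + y) → ∃ w : Q, a = b + w

/-- `Q` has no nontrivial unit: `x + y = 0 → x = 0`. -/
def HasNoNontrivialAddUnits (Q : Type*) [AddCommMonoid Q] : Prop :=
  ∀ x y : Q, x + y = 0 → x = 0

/-! ### Freeness/extension conditions on rings -/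

/-- Every (not necessarily finitely generated) projective `R`-module is free. -/
def AllProjectiveFree (R : Type u) [CommRing R] : Prop :=
  ∀ (M : Type u) [AddCommGroup M] [Module R M], Module.Projective R M → Module.Free R M

/-- Every finitely generated projective `B`-module is free. -/
def AllFGProjectiveFree (B : Type u) [CommRing B] : Prop :=
  ∀ (M : Type u) [AddCommGroup M] [Module B M],
    Module.Finite B M → Module.Projective B M → Module.Free B M

/-- Every finitely generated projective `B`-module is extended from `R`, i.e. of the form
`B ⊗_R F` for a finitely generated projective `R`-module `F`. -/
def AllFGProjectiveExtended (R B : Type u) [CommRing R] [CommRing B] [Algebra R B] : Prop :=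
  ∀ (M : Type u) [AddCommGroup M] [Module B M],
    Module.Finite B M → Module.Projective B M →
    ∃ (F : Type u) (_ : AddCommGroup F) (_ : Module R F),
      Module.Finite R F ∧ Module.Projective R F ∧ Nonempty (M ≃ₗ[B] B ⊗[R] F)

/-- Condition (†): every projective `R`-module is free and every finitely generated
projective module over the group algebra `R[Q]` of a torsion-free abelian group `Q`
is extended from `R`. -/
def CondDagger (R : Type u) [CommRing R] : Prop :=
  AllProjectiveFree R ∧
  ∀ (Q : Type u) [AddCommGroup Q], IsTorsionFreeAddMonoid Q →
    AllFGProjectiveExtended R (AddMonoidAlgebra R Q)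

/-- Condition (††): every projective `R`-module is free and every finitely generated
projective module over `R[Q × ℤ^n]` is extended from `R`, whenever `Q` is torsion-free,
seminormal, cancellative and has no nontrivial unit. -/
def CondDaggerDagger (R : Type u) [CommRing R] : Prop :=
  AllProjectiveFree R ∧
  ∀ (n : ℕ) (Q : Type u) [AddCommMonoid Q],
    IsCancellativeAddMonoid Q → IsTorsionFreeAddMonoid Q → IsSeminormalAddMonoid Q →
    HasNoNontrivialAddUnits Q →
    AllFGProjectiveExtended R (AddMonoidAlgebra R (Q × (Fin n → ℤ)))

/-! ### Gradings -/

/-- A map `f` is degree-preserving for the gradings `ℳ`, `𝒩`. -/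
def MapsGraded {P M N : Type*} {R : Type*} [Semiring R] [AddCommMonoid M] [AddCommMonoid N]
    [Module R M] [Module R N] (f : M → N)
    (ℳ : P → Submodule R M) (𝒩 : P → Submodule R N) : Prop :=
  ∀ c : P, ∀ m ∈ ℳ c, f m ∈ 𝒩 c

/-- `𝒜` is a `P`-grading of the `R`-algebra `A`:
`A = ⊕_{a ∈ P} A_a`, `A_a · A_b ⊆ A_{a+b}`, `1 ∈ A_0`. -/
structure IsGradedRing {R A P : Type*} [CommRing R] [Ring A] [Algebra R A]
    [AddCommGroup P] [DecidableEq P] (𝒜 : P → Submodule R A) : Prop where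
  is_internal : DirectSum.IsInternal 𝒜
  one_mem : (1 : A) ∈ 𝒜 0
  mul_mem : ∀ {a b : P} {x y : A}, x ∈ 𝒜 a → y ∈ 𝒜 b → x * y ∈ 𝒜 (a + b)

/-- `ℳ` is a `P`-grading of the `A`-module `M`, compatible with the grading `𝒜` of `A`:
`M = ⊕_{a ∈ P} M_a` and `A_a • M_b ⊆ M_{a+b}`. -/
structure IsGradedModule {R A P M : Type*} [CommRing R] [Ring A] [Algebra R A]
    [AddCommGroup P] [DecidableEq P] [AddCommGroup M] [Module R M] [Module A M]
    [IsScalarTower R A M] (𝒜 : P → Submodule R A) (ℳ : P → Submodule R M) : Prop where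
  is_internal : DirectSum.IsInternal ℳ
  smul_mem : ∀ {a b : P} {x : A} {m : M}, x ∈ 𝒜 a → m ∈ ℳ b → x • m ∈ ℳ (a + b)

/-- The natural `P`-grading on `B ⊗[R] F`: `(B ⊗ F)_c = ⊕_{a+b=c} B_a ⊗ F_b`. -/
noncomputable def tensorGrading {R B F P : Type*} [CommRing R] [CommRing B] [Algebra R B]
    [AddCommGroup P] [AddCommGroup F] [Module R F]
    (ℬ : P → Submodule R B) (ℱ : P → Submodule R F) : P → Submodule R (B ⊗[R] F) :=
  fun c => Submodule.span R
    {z | ∃ a b : P, a + b = c ∧ ∃ x ∈ ℬ a, ∃ f ∈ ℱ b, z = x ⊗ₜ[R] f}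

/-- A `P`-graded `A`-module `(M, ℳ)` is (equivariantly) extended from `R`, i.e. trivial:
it is isomorphic, as a `P`-graded `A`-module, to `A ⊗_R F` for some `P`-graded `R`-module
`F` which is finitely generated and projective over `R`. -/
def IsGradedExtendedFrom (R : Type u) {A P : Type u} [CommRing R] [CommRing A]
    [Algebra R A] [AddCommGroup P] [DecidableEq P] (𝒜 : P → Submodule R A)
    (M : Type u) [AddCommGroup M] [Module R M] [Module A M] [IsScalarTower R A M]
    (ℳ : P → Submodule R M) : Prop :=
  ∃ (F : Type u) (_ : AddCommGroup F) (_ : Module R F) (ℱ : P → Submodule R F),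
    DirectSum.IsInternal ℱ ∧ Module.Finite R F ∧ Module.Projective R F ∧
    ∃ e : M ≃ₗ[A] A ⊗[R] F,
      MapsGraded (⇑e) ℳ (tensorGrading 𝒜 ℱ) ∧ MapsGraded (⇑e.symm) (tensorGrading 𝒜 ℱ) ℳ

/-! ### Monoid algebras, cones and faces -/

/-- The grading of a monoid algebra `R[Λ]` induced by a degree function `deg : Λ → P`:
the piece of degree `p` is spanned by the monomials `e_s` with `deg s = p`. -/
noncomputable def monAlgGrading (R : Type*) [CommRing R] {Λ P : Type*} [AddCommMonoid Λ]
    (deg : Λ → P) : P → Submodule R (AddMonoidAlgebra R Λ) :=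
  fun p => Submodule.span R {x | ∃ s : Λ, deg s = p ∧ x = AddMonoidAlgebra.single s 1}

/-- The lattice points `σ ∩ L` of the rational polyhedral cone
`σ = ⋂ᵢ (l i)⁻¹(ℚ≥0)` in `L ⊗ ℚ`. -/
def coneLatticePoints {L : Type*} [AddCommGroup L] {q : ℕ} (l : Fin q → L →+ ℚ) :
    AddSubmonoid L where
  carrier := {m | ∀ i, 0 ≤ l i m}
  zero_mem' := fun i => by simp
  add_mem' := by
    intro a b ha hb i
    rw [map_add]
    exact add_nonneg (ha i) (hb i)

/-- The lattice points `τ ∩ L` of the face `τ = σ ∩ l'⁻¹(0)` of the cone `σ`. -/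
def faceLatticePoints {L : Type*} [AddCommGroup L] {q : ℕ} (l : Fin q → L →+ ℚ)
    (l' : L →+ ℚ) : AddSubmonoid L where
  carrier := {m | (∀ i, 0 ≤ l i m) ∧ l' m = 0}
  zero_mem' := ⟨fun i => by simp, by simp⟩
  add_mem' := by
    intro a b ha hb
    refine ⟨fun i => ?_, ?_⟩
    · rw [map_add]; exact add_nonneg (ha.1 i) (hb.1 i)
    · rw [map_add, ha.2, hb.2, add_zero]

/-- The submonoid of elements of a submonoid `S ⊆ L` killed by `ψ : L →+ P`
(the "invariant" part of `S`). -/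
def kerSubmonoidIn {L P : Type*} [AddCommMonoid L] [AddCommMonoid P]
    (S : AddSubmonoid L) (ψ : L →+ P) : AddSubmonoid L where
  carrier := {m | m ∈ S ∧ ψ m = 0}
  zero_mem' := ⟨S.zero_mem, map_zero ψ⟩
  add_mem' := by
    intro a b ha hb
    exact ⟨S.add_mem ha.1 hb.1, by rw [map_add, ha.2, hb.2, add_zero]⟩

/-- The kernel submonoid `{q ∈ Q | u q = 0}` of a monoid homomorphism `u : Q →+ P`. -/
def kerSubmonoid {Q P : Type*} [AddCommMonoid Q] [AddCommMonoid P] (u : Q →+ P) :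
    AddSubmonoid Q where
  carrier := {q | u q = 0}
  zero_mem' := map_zero u
  add_mem' := by
    intro a b ha hb
    simp only [Set.mem_setOf_eq] at *
    rw [map_add, ha, hb, add_zero]

/-- `S` spans `L ⊗ ℚ`: a positive multiple of every lattice element is a difference of
elements of `S` (this expresses that the cone is "strongly convex", i.e. spans `L_ℚ`). -/
def SpansLattice {L : Type*} [AddCommGroup L] (S : AddSubmonoid L) : Prop :=
  ∀ m : L, ∃ n : ℕ, 0 < n ∧ ∃ x ∈ S, ∃ y ∈ S, (n : ℤ) • m = x - y

/-!
The monoid `σ ∩ M` is the image, under `(x, z) ↦ ρ x`, of the monoid of solutions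
`(x, z) ∈ ℕⁿ × ℕ^q` of the linear equations `z i = D i * l i (ρ x)` and `θ (ρ x) = 0`, where
`ρ : ℕⁿ → L` is onto and the integers `D i > 0` clear the denominators of `l i`.  Solution
monoids of linear equations over `ℕⁿ × ℕ^q` are finitely generated by Gordan's lemma
(`AddSubmonoid.fg_eqLocusM`, an instance of Dickson's lemma), and so are their images.
-/

theorem AddMonoidHom.exists_pos_nat_mul_eq_intCast {L : Type*} [AddCommMonoid L]
    [AddMonoid.FG L] (f : L →+ ℚ) : ∃ D : ℕ, 0 < D ∧ ∀ m, ∃ z : ℤ, (D : ℚ) * f m = z := by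
  obtain ⟨s, hs⟩ := AddMonoid.FG.fg_top (M := L)
  refine ⟨∏ x ∈ s, (f x).den, Finset.prod_pos fun x _ => (f x).pos, fun m => ?_⟩
  have hm : m ∈ AddSubmonoid.closure (s : Set L) := hs ▸ AddSubmonoid.mem_top m
  induction hm using AddSubmonoid.closure_induction with
  | mem x hx =>
    obtain ⟨k, hk⟩ := Finset.dvd_prod_of_mem (fun x => (f x).den) hx
    refine ⟨k * (f x).num, ?_⟩
    rw [hk, Int.cast_mul, Int.cast_natCast, ← Rat.mul_den_eq_num, Nat.cast_mul]
    ring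
  | zero => exact ⟨0, by simp⟩
  | add x y _ _ hx hy =>
    obtain ⟨zx, hzx⟩ := hx
    obtain ⟨zy, hzy⟩ := hy
    exact ⟨zx + zy, by rw [map_add, mul_add, hzx, hzy, Int.cast_add]⟩

theorem kerSubmonoidIn_coneLatticePoints_fg {L P : Type*} [AddCommGroup L] [AddMonoid.FG L]
    [AddCommGroup P] {q : ℕ} (l : Fin q → L →+ ℚ) (θ : L →+ P) :
    (kerSubmonoidIn (coneLatticePoints l) θ).FG := by
  choose D hD hint using fun i => (l i).exists_pos_nat_mul_eq_intCast
  obtain ⟨n, ρ, hρ⟩ := Module.Finite.exists_fin' ℕ L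
  let π : (Fin n → ℕ) × (Fin q → ℕ) →+ L := ρ.toAddMonoidHom.comp (AddMonoidHom.fst _ _)
  let lhs : (Fin n → ℕ) × (Fin q → ℕ) →+ (Fin q → ℚ) × P :=
    (((Nat.castAddMonoidHom ℚ).compLeft (Fin q)).comp (AddMonoidHom.snd _ _)).prod 0
  let rhs : (Fin n → ℕ) × (Fin q → ℕ) →+ (Fin q → ℚ) × P :=
    (AddMonoidHom.pi fun i => (D i • l i).comp π).prod (θ.comp π)
  suffices (lhs.eqLocusM rhs).map π = kerSubmonoidIn (coneLatticePoints l) θ from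
    this ▸ (AddSubmonoid.fg_eqLocusM lhs rhs).map π
  ext m
  constructor
  · rintro ⟨⟨x, z⟩, hxz, rfl⟩
    obtain ⟨hz, hθ⟩ := Prod.ext_iff.mp hxz
    refine ⟨fun i => ?_, hθ.symm⟩
    have hzi : (z i : ℚ) = D i * l i (ρ x) := congrFun hz i
    exact (mul_nonneg_iff_of_pos_left (by exact_mod_cast hD i)).mp (hzi ▸ (z i).cast_nonneg)
  · rintro ⟨hcone, hθ⟩
    obtain ⟨x, rfl⟩ := hρ m
    choose z hz using fun i => hint i (ρ x)
    have hz_nonneg : ∀ i, 0 ≤ z i := fun i => by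
      exact_mod_cast hz i ▸ mul_nonneg (Nat.cast_nonneg _) (hcone i)
    refine ⟨(x, fun i => (z i).toNat), Prod.ext (funext fun i => ?_) hθ.symm, rfl⟩
    show ((z i).toNat : ℚ) = D i * l i (ρ x)
    rw [hz, ← Int.cast_natCast, Int.toNat_of_nonneg (hz_nonneg i)]

theorem cone_meets_kernel_finitely_generated_general
    (L : Type u) [AddCommGroup L] [Module.Finite ℤ L]
    (q : ℕ) (l : Fin q → L →+ ℚ)
    (P : Type u) [AddCommGroup P] (θ : L →+ P)
    (R : Type u) [CommRing R] :
    AddMonoid.FG ↥(kerSubmonoidIn (coneLatticePoints l) θ) ∧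
    Algebra.FiniteType R (AddMonoidAlgebra R ↥(kerSubmonoidIn (coneLatticePoints l) θ)) := by
  have : AddMonoid.FG L := AddGroup.fg_iff_addMonoid_fg.mp (Module.Finite.iff_addGroup_fg.mp ‹_›)
  have hfg := (AddMonoid.fg_iff_addSubmonoid_fg _).mpr (kerSubmonoidIn_coneLatticePoints_fg l θ)
  exact ⟨hfg, inferInstance⟩

theorem cone_meets_kernel_finitely_generated
    (L : Type u) [AddCommGroup L] [Module.Free ℤ L] [Module.Finite ℤ L]
    (q : ℕ) (l : Fin q → L →+ ℚ) (hlne : ∀ i, l i ≠ 0)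
    (P : Type u) [AddCommGroup P] [AddGroup.FG P] (θ : L →+ P)
    (R : Type u) [CommRing R] [IsNoetherianRing R] :
    AddMonoid.FG ↥(kerSubmonoidIn (coneLatticePoints l) θ) ∧
    Algebra.FiniteType R (AddMonoidAlgebra R ↥(kerSubmonoidIn (coneLatticePoints l) θ)) :=
  cone_meets_kernel_finitely_generated_general L q l P θ R
end

section
/- Let L be a lattice and σ ⊆ L_ℚ a strongly convex rational polyhedral cone cut out by linear functionals l_1,…,l_q. Let R be a commutative ring, A = R[σ∩L] ⊆ R[L], and let J ⊆ A be the ideal generated by the monomials e_m with m strictly inside σ (i.e., l_i(m) > 0 for all i). Then for any m ∈ L there is a sufficiently large integer N such that f/e_m ∈ A for every f ∈ J^N; that is, e_{−m}·f ∈ R[σ∩L] inside R[L]. Equivalently, for every m ∈ L there is N such that for any m_1,…,m_N ∈ σ∩L strictly inside σ, one has m_1 + ⋯ + m_N − m ∈ σ∩L. -/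
open scoped TensorProduct

universe u

/-!
Since `L` is finitely generated, each `l i` takes values in `(1 / dᵢ) ℤ` for some `dᵢ > 0`, so
`l i ≥ 1 / dᵢ` at every lattice point strictly inside `σ`. A sum of `N ≥ dᵢ ⌈l i m⌉` such points
therefore has `l i`-value at least `l i m`, for every `i` at once when `N` is the largest of
these bounds.
-/

open Finset

theorem AddMonoidHom.exists_common_denominator {L : Type*} [AddCommGroup L] [Module.Finite ℤ L]
    (f : L →+ ℚ) : ∃ d : ℕ, 0 < d ∧ ∀ x, ∃ z : ℤ, (d : ℚ) * f x = z := by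
  obtain ⟨n, s, hs⟩ := Module.Finite.exists_fin (R := ℤ) (M := L)
  refine ⟨∏ j, (f (s j)).den, prod_pos fun j _ => (f (s j)).pos, fun x => ?_⟩
  have hx : x ∈ Submodule.span ℤ (Set.range s) := hs ▸ Submodule.mem_top
  induction hx using Submodule.span_induction with
  | mem _ hy =>
    obtain ⟨j, rfl⟩ := hy
    obtain ⟨c, hc⟩ := dvd_prod_of_mem (fun j => (f (s j)).den) (mem_univ j)
    exact ⟨(f (s j)).num * c, by rw [hc]; push_cast; rw [← Rat.mul_den_eq_num]; ring⟩
  | zero => exact ⟨0, by simp⟩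
  | add _ _ _ _ hy hz =>
    obtain ⟨a, ha⟩ := hy
    obtain ⟨b, hb⟩ := hz
    exact ⟨a + b, by rw [map_add, mul_add, ha, hb]; push_cast; rfl⟩
  | smul k _ _ hy =>
    obtain ⟨a, ha⟩ := hy
    exact ⟨k * a, by rw [map_zsmul, zsmul_eq_mul, mul_left_comm, ha]; push_cast; rfl⟩

theorem one_le_natCast_mul_of_eq_intCast {d : ℕ} {y : ℚ} {z : ℤ} (h : (d : ℚ) * y = z)
    (hd : 0 < d) (hy : 0 < y) : 1 ≤ (d : ℚ) * y := by
  have hz : 0 < z := by exact_mod_cast h ▸ mul_pos (Nat.cast_pos.mpr hd) hy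
  rw [h]
  exact_mod_cast hz

theorem le_sum_of_mul_natCeil_le_card {ι : Type*} (s : Finset ι) (g : ι → ℚ) {d : ℕ} {c : ℚ}
    (hd : 0 < d) (hs : d * ⌈c⌉₊ ≤ #s) (hg : ∀ k ∈ s, 1 ≤ (d : ℚ) * g k) : c ≤ ∑ k ∈ s, g k := by
  have hdQ : (0 : ℚ) < d := Nat.cast_pos.mpr hd
  refine le_of_mul_le_mul_left ?_ hdQ
  calc (d : ℚ) * c ≤ d * ⌈c⌉₊ := by gcongr; exact Nat.le_ceil c
    _ ≤ #s := by exact_mod_cast hs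
    _ = #s • (1 : ℚ) := by simp
    _ ≤ ∑ k ∈ s, (d : ℚ) * g k := card_nsmul_le_sum s _ 1 hg
    _ = d * ∑ k ∈ s, g k := by rw [mul_sum]

theorem interior_monomials_swallow_denominators_general
    (L : Type u) [AddCommGroup L] [Module.Finite ℤ L]
    (q : ℕ) (l : Fin q → L →+ ℚ)
    (m : L) :
    ∃ N : ℕ, ∀ ms : Fin N → L,
      (∀ k, ms k ∈ coneLatticePoints l ∧ ∀ i, 0 < l i (ms k)) →
      (∑ k, ms k) - m ∈ coneLatticePoints l := by
  choose d hd hdz using fun i => (l i).exists_common_denominator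
  refine ⟨univ.sup fun i => d i * ⌈l i m⌉₊, fun ms hms i => ?_⟩
  show 0 ≤ l i ((∑ k, ms k) - m)
  rw [map_sub, map_sum, sub_nonneg]
  refine le_sum_of_mul_natCeil_le_card _ _ (hd i) ?_ fun k _ => ?_
  · rw [card_univ, Fintype.card_fin]
    exact le_sup (f := fun i => d i * ⌈l i m⌉₊) (mem_univ i)
  · obtain ⟨z, hz⟩ := hdz i (ms k)
    exact one_le_natCast_mul_of_eq_intCast hz (hd i) ((hms k).2 i)

theorem interior_monomials_swallow_denominators
    (L : Type u) [AddCommGroup L] [Module.Free ℤ L] [Module.Finite ℤ L]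
    (q : ℕ) (l : Fin q → L →+ ℚ) (hlne : ∀ i, l i ≠ 0)
    (hspan : SpansLattice (coneLatticePoints l))
    (m : L) :
    ∃ N : ℕ, ∀ ms : Fin N → L,
      (∀ k, ms k ∈ coneLatticePoints l ∧ ∀ i, 0 < l i (ms k)) →
      (∑ k, ms k) - m ∈ coneLatticePoints l :=
  interior_monomials_swallow_denominators_general L q l m
end

section
/- Let R be a commutative noetherian ring, P a finitely generated abelian group, and let 0 → M_1 → M_2 → M_3 → 0 be a short exact sequence of P-graded R-modules with degree-preserving R-linear maps. Then: (a) for each a ∈ P the induced sequence of degree-a components 0 → (M_1)_a → (M_2)_a → (M_3)_a → 0 is exact; and (b) the sequence admits a degree-preserving R-linear splitting if and only if it admits an R-linear splitting (i.e., it splits as a sequence of P-graded R-modules if and only if it splits as a sequence of R-modules). -/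
open scoped TensorProduct

universe u

/-!
A degree-preserving map commutes with taking homogeneous components: `(φ m)ₐ = φ (mₐ)`.
So a homogeneous element of the image of `φ` is the image of the homogeneous component of
any preimage, which gives the componentwise exactness. For the splitting, replace an
`R`-linear section `s` of `g` by its degree-preserving part `m ↦ ∑ₐ (s mₐ)ₐ`; since `g`
preserves degrees, `g` composed with this part is the degree-preserving part of
`g ∘ s = id`, i.e. the identity.
-/

open DirectSum

section Graded

variable {R P M N O : Type*} [Semiring R] [AddCommMonoid M] [AddCommMonoid N] [AddCommMonoid O]
  [Module R M] [Module R N] [Module R O] [DecidableEq P]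
  {ℳ : P → Submodule R M} {𝒩 : P → Submodule R N} {𝒪 : P → Submodule R O}
  [Decomposition ℳ] [Decomposition 𝒩] [Decomposition 𝒪]

theorem MapsGraded.decompose_apply {φ : M →ₗ[R] N} (hφ : MapsGraded φ ℳ 𝒩) (m : M) (a : P) :
    (decompose 𝒩 (φ m) a : N) = φ (decompose ℳ m a) := by
  induction m using Decomposition.inductionOn ℳ with
  | zero => simp
  | @homogeneous i x =>
    rw [decompose_coe, decompose_of_mem 𝒩 (hφ i x x.2)]
    by_cases h : a = i
    · subst h
      simp
    · simp [of_eq_of_ne _ _ _ h]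
  | add x y hx hy => simp [hx, hy]

theorem MapsGraded.exists_mem_eq {φ : M →ₗ[R] N} (hφ : MapsGraded φ ℳ 𝒩) {a : P} {y : N}
    (hy : y ∈ 𝒩 a) {x : M} (hx : φ x = y) : ∃ x' ∈ ℳ a, φ x' = y :=
  ⟨decompose ℳ x a, (decompose ℳ x a).2, by
    rw [← hφ.decompose_apply, hx, decompose_of_mem_same 𝒩 hy]⟩

variable (ℳ 𝒩) in
/-- The degree-preserving part `m ↦ ∑ₐ (s mₐ)ₐ` of a linear map `s`. -/
noncomputable def LinearMap.gradedPart (s : M →ₗ[R] N) : M →ₗ[R] N :=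
  (decomposeLinearEquiv 𝒩).symm ∘ₗ
    lmap (fun a => component R P (𝒩 ·) a ∘ₗ (decomposeLinearEquiv 𝒩).toLinearMap ∘ₗ s ∘ₗ
      (ℳ a).subtype) ∘ₗ
    (decomposeLinearEquiv ℳ).toLinearMap

theorem LinearMap.gradedPart_apply_of_mem (s : M →ₗ[R] N) {a : P} {m : M} (hm : m ∈ ℳ a) :
    s.gradedPart ℳ 𝒩 m = decompose 𝒩 (s m) a := by
  lift m to ℳ a using hm
  simp [gradedPart, decomposeLinearEquiv_apply, decomposeLinearEquiv_symm_apply,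
    ← apply_eq_component]

theorem LinearMap.mapsGraded_gradedPart (s : M →ₗ[R] N) :
    MapsGraded (s.gradedPart ℳ 𝒩) ℳ 𝒩 := fun a m hm => by
  rw [s.gradedPart_apply_of_mem hm]
  exact (decompose 𝒩 (s m) a).2

theorem LinearMap.gradedPart_eq_self {s : M →ₗ[R] N} (hs : MapsGraded s ℳ 𝒩) :
    s.gradedPart ℳ 𝒩 = s :=
  decompose_lhom_ext ℳ fun a => LinearMap.ext fun m => by
    simp [s.gradedPart_apply_of_mem m.2, decompose_of_mem_same 𝒩 (hs a m m.2)]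

theorem MapsGraded.comp_gradedPart {g : N →ₗ[R] O} (hg : MapsGraded g 𝒩 𝒪) (s : M →ₗ[R] N) :
    g ∘ₗ s.gradedPart ℳ 𝒩 = (g ∘ₗ s).gradedPart ℳ 𝒪 :=
  decompose_lhom_ext ℳ fun a => LinearMap.ext fun m => by
    simp [s.gradedPart_apply_of_mem m.2, (g ∘ₗ s).gradedPart_apply_of_mem m.2,
      hg.decompose_apply]

end Graded

theorem graded_ses_componentwise_exact_and_split_iff_split_general
    (R : Type u) [CommRing R]
    (P : Type u) [AddCommGroup P] [DecidableEq P]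
    (M₁ M₂ M₃ : Type u) [AddCommGroup M₁] [AddCommGroup M₂] [AddCommGroup M₃]
    [Module R M₁] [Module R M₂] [Module R M₃]
    (ℳ₁ : P → Submodule R M₁) (ℳ₂ : P → Submodule R M₂) (ℳ₃ : P → Submodule R M₃)
    (h1 : DirectSum.IsInternal ℳ₁) (h2 : DirectSum.IsInternal ℳ₂)
    (h3 : DirectSum.IsInternal ℳ₃)
    (f : M₁ →ₗ[R] M₂) (g : M₂ →ₗ[R] M₃)
    (hf : MapsGraded (⇑f) ℳ₁ ℳ₂) (hg : MapsGraded (⇑g) ℳ₂ ℳ₃)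
    (hinj : Function.Injective f) (hsurj : Function.Surjective g)
    (hexact : LinearMap.range f = LinearMap.ker g) :
    (∀ a : P,
      (∀ m ∈ ℳ₁ a, f m = 0 → m = 0) ∧
      (∀ y ∈ ℳ₃ a, ∃ x ∈ ℳ₂ a, g x = y) ∧
      (∀ x ∈ ℳ₂ a, g x = 0 → ∃ m ∈ ℳ₁ a, f m = x)) ∧
    ((∃ s : M₃ →ₗ[R] M₂, g.comp s = LinearMap.id ∧ MapsGraded (⇑s) ℳ₃ ℳ₂) ↔
      (∃ s : M₃ →ₗ[R] M₂, g.comp s = LinearMap.id)) := by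
  let := h1.chooseDecomposition
  let := h2.chooseDecomposition
  let := h3.chooseDecomposition
  refine ⟨fun a => ⟨?_, ?_, ?_⟩, ⟨fun ⟨s, hs, _⟩ => ⟨s, hs⟩, fun ⟨s, hs⟩ => ?_⟩⟩
  · exact fun m _ hm => hinj (hm.trans (map_zero f).symm)
  · intro y hy
    obtain ⟨x, hx⟩ := hsurj y
    exact hg.exists_mem_eq hy hx
  · intro x hx hgx
    obtain ⟨m, hm⟩ : x ∈ LinearMap.range f := hexact ▸ hgx
    exact hf.exists_mem_eq hx hm
  · refine ⟨s.gradedPart ℳ₃ ℳ₂, ?_, s.mapsGraded_gradedPart⟩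
    rw [hg.comp_gradedPart, hs, LinearMap.gradedPart_eq_self fun _ _ hm => hm]

theorem graded_ses_componentwise_exact_and_split_iff_split
    (R : Type u) [CommRing R] [IsNoetherianRing R]
    (P : Type u) [AddCommGroup P] [AddGroup.FG P] [DecidableEq P]
    (M₁ M₂ M₃ : Type u) [AddCommGroup M₁] [AddCommGroup M₂] [AddCommGroup M₃]
    [Module R M₁] [Module R M₂] [Module R M₃]
    (ℳ₁ : P → Submodule R M₁) (ℳ₂ : P → Submodule R M₂) (ℳ₃ : P → Submodule R M₃)
    (h1 : DirectSum.IsInternal ℳ₁) (h2 : DirectSum.IsInternal ℳ₂)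
    (h3 : DirectSum.IsInternal ℳ₃)
    (f : M₁ →ₗ[R] M₂) (g : M₂ →ₗ[R] M₃)
    (hf : MapsGraded (⇑f) ℳ₁ ℳ₂) (hg : MapsGraded (⇑g) ℳ₂ ℳ₃)
    (hinj : Function.Injective f) (hsurj : Function.Surjective g)
    (hexact : LinearMap.range f = LinearMap.ker g) :
    (∀ a : P,
      (∀ m ∈ ℳ₁ a, f m = 0 → m = 0) ∧
      (∀ y ∈ ℳ₃ a, ∃ x ∈ ℳ₂ a, g x = y) ∧
      (∀ x ∈ ℳ₂ a, g x = 0 → ∃ m ∈ ℳ₁ a, f m = x)) ∧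
    ((∃ s : M₃ →ₗ[R] M₂, g.comp s = LinearMap.id ∧ MapsGraded (⇑s) ℳ₃ ℳ₂) ↔
      (∃ s : M₃ →ₗ[R] M₂, g.comp s = LinearMap.id)) :=
  graded_ses_componentwise_exact_and_split_iff_split_general R P M₁ M₂ M₃ ℳ₁ ℳ₂ ℳ₃ h1 h2 h3 f g hf
    hg hinj hsurj hexact
end
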